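/- For a single stable mode, the derivative of the angle autocorrelation recovers the angle impulse response up to scaling: if C(τ) = −α η² [(1/(2c) + 1/γ) e^{cτ} + (1/(2d) + 1/γ) e^{dτ}], then dC/dτ(τ) = −(α/(2γ)) η (e^{cτ} − e^{dτ}) = −(α/(2γ)) h(τ), i.e., h(τ) = −(2γ/α) C'(τ). -/

import Mathlib

/-!
Differentiating `C` termwise multiplies the coefficient of `exp (c τ)` by `c`. Since
`γ = -(c + d)` and `η (c - d) = 1`, we get `η² (1/(2c) + 1/γ) c = η² (2c + γ) / (2γ) = η / (2γ)`,
and symmetrically (swap `c ↔ d`, `η ↔ -η`) for the coefficient of `exp (d τ)`, so `C'` is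
`-(α / (2γ))` times `h`.
-/

open Complex

lemma hasDerivAt_cexp_const_mul_ofReal (c : ℂ) (τ : ℝ) :
    HasDerivAt (fun t : ℝ => cexp (c * t)) (c * cexp (c * τ)) τ := by
  simpa [mul_comm] using ((hasDerivAt_id τ).ofReal_comp.const_mul c).cexp

lemma hasDerivAt_linear_combination_cexp (a b c d : ℂ) (τ : ℝ) :
    HasDerivAt (fun t : ℝ => a * cexp (c * t) + b * cexp (d * t))
      (a * (c * cexp (c * τ)) + b * (d * cexp (d * τ))) τ :=
  ((hasDerivAt_cexp_const_mul_ofReal c τ).const_mul a).add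
    ((hasDerivAt_cexp_const_mul_ofReal d τ).const_mul b)

lemma autocorrelation_coeff_mul_rate {α γ η c d : ℂ} (hγ : γ ≠ 0) (hc : c ≠ 0)
    (hsum : c + d = -γ) (hdiff : c - d = 1 / η) :
    -α * η ^ 2 * ((1 / (2 * c) + 1 / γ) * c) = -(α / (2 * γ)) * η := by
  rcases eq_or_ne η 0 with rfl | hη
  · simp
  · rw [eq_div_iff hη] at hdiff
    field_simp
    linear_combination (-α * η) * hsum - α * hdiff

lemma hasDerivAt_autocorrelation {α γ η c d : ℂ} (hγ : γ ≠ 0) (hc : c ≠ 0) (hd : d ≠ 0)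
    (hsum : c + d = -γ) (hdiff : c - d = 1 / η) (τ : ℝ) :
    HasDerivAt (fun t : ℝ => -α * η ^ 2 *
        ((1 / (2 * c) + 1 / γ) * cexp (c * t) + (1 / (2 * d) + 1 / γ) * cexp (d * t)))
      (-(α / (2 * γ)) * (η * (cexp (c * τ) - cexp (d * τ)))) τ := by
  have hc_coeff := autocorrelation_coeff_mul_rate (α := α) hγ hc hsum hdiff
  have hd_coeff := autocorrelation_coeff_mul_rate (α := α) (η := -η) hγ hd
    (by rw [add_comm, hsum]) (by rw [one_div_neg_eq_neg_one_div, ← hdiff, neg_sub])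
  rw [neg_sq] at hd_coeff
  refine ((hasDerivAt_linear_combination_cexp _ _ c d τ).const_mul (-α * η ^ 2)).congr_deriv ?_
  linear_combination cexp (c * τ) * hc_coeff + cexp (d * τ) * hd_coeff

theorem stmt7_general (γ α : ℝ) (hγ : 0 < γ) (hα : 0 < α)
    (c d η : ℂ) (hcre : c.re < 0) (hdre : d.re < 0)
    (hsum : c + d = -(γ : ℂ)) (hdiff : c - d = 1 / η)
    (C h : ℝ → ℂ)
    (hC : ∀ τ : ℝ, C τ = -(α : ℂ) * η ^ 2 *
      ((1 / (2 * c) + 1 / (γ : ℂ)) * Complex.exp (c * τ)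
        + (1 / (2 * d) + 1 / (γ : ℂ)) * Complex.exp (d * τ)))
    (hh : ∀ τ : ℝ, h τ = η * (Complex.exp (c * τ) - Complex.exp (d * τ))) :
    ∀ τ : ℝ, deriv C τ = -((α : ℂ) / (2 * γ)) * h τ ∧
      h τ = -((2 * γ : ℝ) / α : ℝ) * deriv C τ := by
  intro τ
  have hc : c ≠ 0 := by rintro rfl; simp at hcre
  have hd : d ≠ 0 := by rintro rfl; simp at hdre
  have hγ0 : (γ : ℂ) ≠ 0 := by exact_mod_cast hγ.ne'
  have hα0 : (α : ℂ) ≠ 0 := by exact_mod_cast hα.ne'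
  have hderiv : deriv C τ = -((α : ℂ) / (2 * γ)) * h τ := by
    rw [funext hC, hh]
    exact (hasDerivAt_autocorrelation hγ0 hc hd hsum hdiff τ).deriv
  refine ⟨hderiv, ?_⟩
  rw [hderiv]
  push_cast
  field_simp

/-- Single-mode angle autocorrelation derivative recovers the angle impulse response:
C'(τ) = -(α/(2γ)) h(τ), i.e., h(τ) = -(2γ/α) C'(τ). -/
theorem stmt7 (γ α : ℝ) (hγ : 0 < γ) (hα : 0 < α)
    (c d η : ℂ) (hcre : c.re < 0) (hdre : d.re < 0)
    (hsum : c + d = -(γ : ℂ)) (hdiff : c - d = 1 / η) (lam : ℝ) (hlam : 0 < lam)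
    (hprod : c * d = (lam : ℂ))
    (C h : ℝ → ℂ)
    (hC : ∀ τ : ℝ, C τ = -(α : ℂ) * η ^ 2 *
      ((1 / (2 * c) + 1 / (γ : ℂ)) * Complex.exp (c * τ)
        + (1 / (2 * d) + 1 / (γ : ℂ)) * Complex.exp (d * τ)))
    (hh : ∀ τ : ℝ, h τ = η * (Complex.exp (c * τ) - Complex.exp (d * τ))) :
    ∀ τ : ℝ, deriv C τ = -((α : ℂ) / (2 * γ)) * h τ ∧
      h τ = -((2 * γ : ℝ) / α : ℝ) * deriv C τ :=
  stmt7_general γ α hγ hα c d η hcre hdre hsum hdiff C h hC hh
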